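/- arXiv:2208.11124 — 3 statements merged into one kernel-verified Lean document; each statement's English description precedes it below -/
import Mathlib

section
/- Let G be a simple graph and u, v distinct vertices with uv not an edge of G. Then SO(G) < SO(G + uv), where G + uv is the graph obtained by adding the edge uv. That is, the Sombor index is strictly increased by adding an edge. -/
/-! Adding edges never decreases a degree, so the term of every old edge can only grow, while
the new edge contributes a positive term `√(d(u)² + d(v)²)` with `d(u) ≥ 1`. -/

/-- The Sombor index of a finite simple graph:
`SO(G) = Σ_{uv ∈ E(G)} √(d(u)² + d(v)²)`. -/
noncomputable def somborIndex {V : Type*} [Fintype V] (G : SimpleGraph V) : ℝ := by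
  classical
  exact ∑ e ∈ G.edgeFinset,
    Sym2.lift ⟨fun u v => Real.sqrt ((G.degree u : ℝ)^2 + (G.degree v : ℝ)^2),
      fun u v => by simp [add_comm]⟩ e

noncomputable def somborWeight {V : Type*} [Fintype V] (G : SimpleGraph V) : Sym2 V → ℝ := by
  classical
  exact Sym2.lift ⟨fun u v => Real.sqrt ((G.degree u : ℝ)^2 + (G.degree v : ℝ)^2),
    fun u v => by simp [add_comm]⟩

section

open SimpleGraph

variable {V : Type*} [Fintype V]

lemma somborIndex_eq_sum_somborWeight (G : SimpleGraph V) [Fintype G.edgeSet] :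
    somborIndex G = ∑ e ∈ G.edgeFinset, somborWeight G e := by
  simp only [somborIndex, somborWeight]
  congr!

lemma somborWeight_mk (G : SimpleGraph V) [DecidableRel G.Adj] (a b : V) :
    somborWeight G s(a, b) = √((G.degree a : ℝ) ^ 2 + (G.degree b : ℝ) ^ 2) := by
  simp only [somborWeight, Sym2.lift_mk]
  congr!

lemma somborWeight_nonneg (G : SimpleGraph V) (e : Sym2 V) : 0 ≤ somborWeight G e := by
  classical
  induction e using Sym2.ind with
  | _ a b => rw [somborWeight_mk]; positivity

lemma somborWeight_mono {G H : SimpleGraph V} (hGH : G ≤ H) (e : Sym2 V) :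
    somborWeight G e ≤ somborWeight H e := by
  classical
  induction e using Sym2.ind with
  | _ a b =>
    rw [somborWeight_mk, somborWeight_mk]
    gcongr <;> exact degree_le_of_le hGH

lemma somborWeight_pos_of_mem_edgeSet {G : SimpleGraph V} {e : Sym2 V} (he : e ∈ G.edgeSet) :
    0 < somborWeight G e := by
  classical
  induction e using Sym2.ind with
  | _ a b =>
    have hdeg : 0 < G.degree a := (G.degree_pos_iff_exists_adj a).mpr ⟨b, he⟩
    rw [somborWeight_mk]
    positivity

lemma somborIndex_lt_somborIndex_of_lt {G H : SimpleGraph V} (hGH : G < H) :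
    somborIndex G < somborIndex H := by
  classical
  obtain ⟨e, heH, heG⟩ := Finset.exists_of_ssubset (edgeFinset_strict_mono hGH)
  rw [somborIndex_eq_sum_somborWeight, somborIndex_eq_sum_somborWeight]
  calc ∑ e ∈ G.edgeFinset, somborWeight G e
      ≤ ∑ e ∈ G.edgeFinset, somborWeight H e :=
        Finset.sum_le_sum fun e _ => somborWeight_mono hGH.le e
    _ < ∑ e ∈ H.edgeFinset, somborWeight H e :=
        Finset.sum_lt_sum_of_subset (edgeFinset_mono hGH.le) heH heG
          (somborWeight_pos_of_mem_edgeSet (mem_edgeFinset.mp heH))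
          fun e _ _ => somborWeight_nonneg H e

end

/-- Adding an edge strictly increases the Sombor index. -/
theorem somborIndex_lt_of_add_edge {V : Type*} [Fintype V] (G : SimpleGraph V)
    (u v : V) (huv : u ≠ v) (h : ¬ G.Adj u v) :
    somborIndex G < somborIndex (G ⊔ SimpleGraph.fromEdgeSet {s(u, v)}) :=
  somborIndex_lt_somborIndex_of_lt
    (left_lt_sup.mpr fun hle => h (hle (by simpa using huv)))
end

section
/- Let H_k be any graph on k ≥ 1 vertices, n and i integers with 2 ≤ i ≤ (n−k)/2, and define G(i, n−k−i) = K_i ∨ H_k ∨ K_{n−k−i} (a graph on n vertices where the clique K_i and the clique K_{n−k−i} are each completely joined to H_k but not to each other). Then SO(G(i, n−k−i)) < SO(G(1, n−k−1)). -/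
/-- The triple join A ∨ H ∨ B: all edges between A and H and between H and B are
added, but none between A and B. -/
def tripleJoin {α β γ : Type*} (A : SimpleGraph α) (H : SimpleGraph β) (B : SimpleGraph γ) :
    SimpleGraph (α ⊕ β ⊕ γ) where
  Adj u v :=
    match u, v with
    | .inl x, .inl y => A.Adj x y
    | .inl _, .inr (.inl _) => True
    | .inr (.inl _), .inl _ => True
    | .inr (.inl x), .inr (.inl y) => H.Adj x y
    | .inr (.inl _), .inr (.inr _) => True
    | .inr (.inr _), .inr (.inl _) => True
    | .inr (.inr x), .inr (.inr y) => B.Adj x y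
    | _, _ => False
  symm := by
    refine ⟨?_⟩
    rintro (x | x | x) (y | y | y) h <;> simp_all <;>
      first | exact h.symm | exact h
  loopless := by
    refine ⟨?_⟩
    rintro (x | x | x) h <;> simp_all

open Finset

namespace SimpleGraph

variable {V : Type*} [Fintype V] (G : SimpleGraph V) [DecidableRel G.Adj]

theorem sum_ite_adj {M : Type*} [AddCommMonoid M] (v : V) (c : M) :
    ∑ w, (if G.Adj v w then c else 0) = G.degree v • c := by
  rw [sum_ite, sum_const_zero, add_zero, sum_const, ← neighborFinset_eq_filter,
    card_neighborFinset_eq_degree]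

theorem degree_eq_sum_ite_adj (v : V) : G.degree v = ∑ w, if G.Adj v w then 1 else 0 := by
  rw [sum_ite_adj, smul_eq_mul, mul_one]

theorem sum_darts_eq_sum_edgeFinset {M : Type*} [AddCommMonoid M] (f : Sym2 V → M) :
    ∑ d : G.Dart, f d.edge = 2 • ∑ e ∈ G.edgeFinset, f e := by
  classical
  rw [← sum_fiberwise_of_maps_to (g := Dart.edge) (t := G.edgeFinset)
    (fun d _ => mem_edgeFinset.2 d.edge_mem), smul_sum]
  refine sum_congr rfl fun e he => ?_
  rw [sum_congr rfl fun d hd => congrArg f (mem_filter.1 hd).2, sum_const,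
    G.dart_edge_fiber_card e (mem_edgeFinset.1 he)]

theorem sum_darts_eq_sum_sum_ite_adj {M : Type*} [AddCommMonoid M] (f : V → V → M) :
    ∑ d : G.Dart, f d.fst d.snd = ∑ u, ∑ v, if G.Adj u v then f u v else 0 := by
  let e : G.Dart ≃ {p : V × V // G.Adj p.1 p.2} :=
    ⟨fun d => ⟨d.toProd, d.adj⟩, fun p => ⟨p.1, p.2⟩, fun _ => rfl, fun _ => rfl⟩
  calc ∑ d : G.Dart, f d.fst d.snd = ∑ p : {p : V × V // G.Adj p.1 p.2}, f p.1.1 p.1.2 :=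
        Fintype.sum_equiv e _ _ fun _ => rfl
    _ = _ := by
      rw [← sum_subtype ({p | G.Adj p.1 p.2} : Finset (V × V)) (by simp) fun q => f q.1 q.2,
        sum_filter, Fintype.sum_prod_type]

end SimpleGraph

open SimpleGraph

theorem somborIndex_eq_sum_sum_ite_adj {V : Type*} [Fintype V] (G : SimpleGraph V)
    [DecidableRel G.Adj] :
    somborIndex G = (∑ u, ∑ v, if G.Adj u v then
      √((G.degree u : ℝ) ^ 2 + (G.degree v : ℝ) ^ 2) else 0) / 2 := by
  have h := G.sum_darts_eq_sum_edgeFinset (Sym2.lift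
    ⟨fun u v => √((G.degree u : ℝ) ^ 2 + (G.degree v : ℝ) ^ 2), fun u v => by simp only [add_comm]⟩)
  rw [nsmul_eq_mul, Nat.cast_ofNat] at h
  rw [← sum_darts_eq_sum_sum_ite_adj, eq_div_iff two_ne_zero, mul_comm, somborIndex]
  -- `somborIndex` is built from classical instances; `congr!` identifies them with the given ones
  exact h ▸ by congr!

section TripleJoin

variable {α β γ : Type*} {A : SimpleGraph α} {H : SimpleGraph β} {B : SimpleGraph γ}
  {x x' : α} {v v' : β} {y y' : γ}

@[simp] theorem tripleJoin_adj_inl_inl :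
    (tripleJoin A H B).Adj (.inl x) (.inl x') ↔ A.Adj x x' := Iff.rfl
@[simp] theorem tripleJoin_adj_inl_inr_inl : (tripleJoin A H B).Adj (.inl x) (.inr (.inl v)) :=
  trivial
@[simp] theorem tripleJoin_adj_inl_inr_inr : ¬(tripleJoin A H B).Adj (.inl x) (.inr (.inr y)) :=
  id
@[simp] theorem tripleJoin_adj_inr_inl_inl : (tripleJoin A H B).Adj (.inr (.inl v)) (.inl x) :=
  trivial
@[simp] theorem tripleJoin_adj_inr_inl_inr_inl :
    (tripleJoin A H B).Adj (.inr (.inl v)) (.inr (.inl v')) ↔ H.Adj v v' := Iff.rfl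
@[simp] theorem tripleJoin_adj_inr_inl_inr_inr :
    (tripleJoin A H B).Adj (.inr (.inl v)) (.inr (.inr y)) := trivial
@[simp] theorem tripleJoin_adj_inr_inr_inl : ¬(tripleJoin A H B).Adj (.inr (.inr y)) (.inl x) :=
  id
@[simp] theorem tripleJoin_adj_inr_inr_inr_inl :
    (tripleJoin A H B).Adj (.inr (.inr y)) (.inr (.inl v)) := trivial
@[simp] theorem tripleJoin_adj_inr_inr_inr_inr :
    (tripleJoin A H B).Adj (.inr (.inr y)) (.inr (.inr y')) ↔ B.Adj y y' := Iff.rfl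

variable (A H B)
  [DecidableRel A.Adj] [DecidableRel H.Adj] [DecidableRel B.Adj]

instance : DecidableRel (tripleJoin A H B).Adj := fun u v => by
  rcases u with x | x | x <;> rcases v with y | y | y <;> dsimp [tripleJoin] <;> infer_instance

variable [Fintype α] [Fintype β] [Fintype γ]

theorem degree_tripleJoin_inl (x : α) :
    (tripleJoin A H B).degree (.inl x) = A.degree x + Fintype.card β := by
  rw [degree_eq_sum_ite_adj, Fintype.sum_sum_type, Fintype.sum_sum_type, degree_eq_sum_ite_adj A]
  simp

theorem degree_tripleJoin_inr_inl (v : β) :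
    (tripleJoin A H B).degree (.inr (.inl v)) = Fintype.card α + H.degree v + Fintype.card γ := by
  rw [add_assoc, degree_eq_sum_ite_adj, Fintype.sum_sum_type, Fintype.sum_sum_type,
    degree_eq_sum_ite_adj H]
  simp

theorem degree_tripleJoin_inr_inr (y : γ) :
    (tripleJoin A H B).degree (.inr (.inr y)) = Fintype.card β + B.degree y := by
  rw [degree_eq_sum_ite_adj, Fintype.sum_sum_type, Fintype.sum_sum_type, degree_eq_sum_ite_adj B]
  simp

end TripleJoin

theorem somborIndex_tripleJoin_top {a b k m : ℕ} (H : SimpleGraph (Fin k)) [DecidableRel H.Adj]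
    (ha : 1 ≤ a) (hb : 1 ≤ b) (hab : a + b = m) :
    somborIndex (tripleJoin (⊤ : SimpleGraph (Fin a)) H (⊤ : SimpleGraph (Fin b))) =
      √2 / 2 * (a * (a - 1) * (a - 1 + k) + b * (b - 1) * (b - 1 + k) : ℝ)
      + ∑ v, (a * √((a - 1 + k) ^ 2 + (H.degree v + m) ^ 2)
          + b * √((b - 1 + k) ^ 2 + (H.degree v + m) ^ 2) : ℝ)
      + (∑ v, ∑ w, if H.Adj v w then
          √((H.degree v + m) ^ 2 + (H.degree w + m) ^ 2 : ℝ) else 0) / 2 := by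
  have hsq (d : ℕ) : √((d : ℝ) ^ 2 + (d : ℝ) ^ 2) = √2 * d := by
    rw [← two_mul, Real.sqrt_mul zero_le_two, Real.sqrt_sq d.cast_nonneg]
  have hdA : ((a - 1 + k : ℕ) : ℝ) = a - 1 + k := by push_cast [Nat.cast_sub ha]; ring
  have hdB : ((k + (b - 1) : ℕ) : ℝ) = b - 1 + k := by push_cast [Nat.cast_sub hb]; ring
  have hD (v : Fin k) : ((a + H.degree v + b : ℕ) : ℝ) = H.degree v + m := by
    rw [← hab]; push_cast; ring
  rw [somborIndex_eq_sum_sum_ite_adj]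
  simp only [Fintype.sum_sum_type, tripleJoin_adj_inl_inl, tripleJoin_adj_inl_inr_inl,
    tripleJoin_adj_inl_inr_inr, tripleJoin_adj_inr_inl_inl, tripleJoin_adj_inr_inl_inr_inl,
    tripleJoin_adj_inr_inl_inr_inr, tripleJoin_adj_inr_inr_inl, tripleJoin_adj_inr_inr_inr_inl,
    tripleJoin_adj_inr_inr_inr_inr, if_true, if_false, sum_ite_adj, degree_tripleJoin_inl,
    degree_tripleJoin_inr_inl, degree_tripleJoin_inr_inr, complete_graph_degree, Fintype.card_fin,
    sum_const_zero, add_zero, zero_add, hsq]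
  simp only [hdA, hdB, hD]
  simp only [add_comm ((_ + (m : ℝ)) ^ 2) (((a : ℝ) - 1 + k) ^ 2),
    add_comm ((_ + (m : ℝ)) ^ 2) (((b : ℝ) - 1 + k) ^ 2),
    sum_const, card_univ, Fintype.card_fin, nsmul_eq_mul, sum_add_distrib, ← mul_sum]
  rw [Nat.cast_sub ha, Nat.cast_sub hb, Nat.cast_one]
  ring

open Set

theorem sqrt_sq_add_sq_add_le (u₁ v₁ u₂ v₂ : ℝ) :
    √((u₁ + u₂) ^ 2 + (v₁ + v₂) ^ 2) ≤ √(u₁ ^ 2 + v₁ ^ 2) + √(u₂ ^ 2 + v₂ ^ 2) := by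
  simpa only [← Complex.norm_add_mul_I, Complex.ofReal_add, add_mul, add_add_add_comm]
    using norm_add_le (u₁ + v₁ * Complex.I : ℂ) (u₂ + v₂ * Complex.I)

theorem StrictConvexOn.sqrt_sq_add_sq {E : Type*} [AddCommGroup E] [Module ℝ E] {s : Set E}
    {g : E → ℝ} (hg : StrictConvexOn ℝ s g) (hg₀ : ∀ x ∈ s, 0 ≤ g x) (h : E →ₗ[ℝ] ℝ) :
    StrictConvexOn ℝ s fun x => √(g x ^ 2 + h x ^ 2) := by
  refine ⟨hg.1, fun x hx y hy hxy l m hl hm hlm => ?_⟩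
  have hg_lt : g (l • x + m • y) ^ 2 < (l * g x + m * g y) ^ 2 :=
    pow_lt_pow_left₀ (hg.2 hx hy hxy hl hm hlm) (hg₀ _ (hg.1 hx hy hl.le hm.le hlm)) two_ne_zero
  calc √(g (l • x + m • y) ^ 2 + h (l • x + m • y) ^ 2)
      < √((l * g x + m * g y) ^ 2 + (l * h x + m * h y) ^ 2) := by
        apply Real.sqrt_lt_sqrt (by positivity)
        simp only [map_add, map_smul, smul_eq_mul]
        linarith
    _ ≤ √((l * g x) ^ 2 + (l * h x) ^ 2) + √((m * g y) ^ 2 + (m * h y) ^ 2) :=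
        sqrt_sq_add_sq_add_le _ _ _ _
    _ = l • √(g x ^ 2 + h x ^ 2) + m • √(g y ^ 2 + h y ^ 2) := by
        simp only [mul_pow, ← mul_add, Real.sqrt_mul (sq_nonneg _), Real.sqrt_sq hl.le,
          Real.sqrt_sq hm.le, smul_eq_mul]

theorem strictConvexOn_mul_sqrt_sq_add_sq {κ : ℝ} (hκ : 0 ≤ κ) (e : ℝ) :
    StrictConvexOn ℝ (Ici 1) fun t => t * √((t - 1 + κ) ^ 2 + e ^ 2) := by
  have hg : StrictConvexOn ℝ (Ici 1) fun t : ℝ => t ^ 2 + (κ - 1) * t :=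
    ((strictConvexOn_pow le_rfl).subset (Ici_subset_Ici.2 zero_le_one) (convex_Ici 1)).add_convexOn
      (((κ - 1) • LinearMap.id : ℝ →ₗ[ℝ] ℝ).convexOn (convex_Ici 1))
  refine (hg.sqrt_sq_add_sq (fun t ht => ?_) (e • LinearMap.id)).congr fun t ht => ?_
  · nlinarith [mem_Ici.1 ht]
  · have ht₀ : 0 ≤ t := zero_le_one.trans ht
    simp only [LinearMap.smul_apply, LinearMap.id_coe, id_eq, smul_eq_mul]
    rw [← Real.sqrt_sq ht₀, ← Real.sqrt_mul (sq_nonneg _), Real.sqrt_sq ht₀]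
    ring_nf

theorem StrictConvexOn.map_add_map_lt_of_add_eq {s : Set ℝ} {f : ℝ → ℝ}
    (hf : StrictConvexOn ℝ s f) {a b x y : ℝ} (hx : x ∈ s) (hy : y ∈ s) (hxa : x < a) (hxb : x < b)
    (hsum : a + b = x + y) : f a + f b < f x + f y := by
  have hxy : x < y := by linarith
  have hyx : 0 < y - x := sub_pos.2 hxy
  set l := (y - a) / (y - x)
  set m := (a - x) / (y - x)
  have hl : 0 < l := div_pos (by linarith) hyx
  have hm : 0 < m := div_pos (by linarith) hyx
  have hlm : l + m = 1 := by rw [← add_div, div_eq_one_iff_eq hyx.ne']; ring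
  have ha : l • x + m • y = a := by simp only [smul_eq_mul, l, m]; field_simp; ring
  have hb : m • x + l • y = b := by
    simp only [smul_eq_mul, l, m]; field_simp; linear_combination (x - y) * hsum
  have h₁ := hf.2 hx hy hxy.ne hl hm hlm
  have h₂ := hf.2 hx hy hxy.ne hm hl (by rw [add_comm, hlm])
  rw [ha] at h₁
  rw [hb] at h₂
  simp only [smul_eq_mul] at h₁ h₂
  linear_combination h₁ + h₂ + (f x + f y) * hlm

theorem cubic_add_cubic_le {κ a b y : ℝ} (hκ : 0 ≤ κ) (ha : 1 ≤ a) (hb : 1 ≤ b)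
    (hsum : a + b = 1 + y) :
    a * (a - 1) * (a - 1 + κ) + b * (b - 1) * (b - 1 + κ) ≤ y * (y - 1) * (y - 1 + κ) := by
  obtain rfl : y = a + b - 1 := by linarith
  have hab : 0 ≤ (a - 1) * (b - 1) := mul_nonneg (sub_nonneg.2 ha) (sub_nonneg.2 hb)
  linarith [mul_nonneg hab (by linarith : 0 ≤ 3 * a + 3 * b + 2 * κ - 4)]

/-- For G(i, n−k−i) = K_i ∨ H_k ∨ K_{n−k−i} with 2 ≤ i ≤ (n−k)/2, one has
SO(G(i, n−k−i)) < SO(G(1, n−k−1)). -/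
theorem somborIndex_tripleJoin_lt (n k i : ℕ) (hk : 1 ≤ k)
    (H : SimpleGraph (Fin k)) (hi : 2 ≤ i) (hin : 2 * i + k ≤ n) :
    somborIndex (tripleJoin (⊤ : SimpleGraph (Fin i)) H (⊤ : SimpleGraph (Fin (n - k - i)))) <
      somborIndex (tripleJoin (⊤ : SimpleGraph (Fin 1)) H
        (⊤ : SimpleGraph (Fin (n - k - 1)))) := by
  classical
  rw [somborIndex_tripleJoin_top H (by omega) (by omega) (show i + (n - k - i) = n - k by omega),
    somborIndex_tripleJoin_top H le_rfl (by omega) (show 1 + (n - k - 1) = n - k by omega),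
    Nat.cast_one]
  have hsum : (i : ℝ) + (n - k - i : ℕ) = 1 + (n - k - 1 : ℕ) := by
    exact_mod_cast (show i + (n - k - i) = 1 + (n - k - 1) by omega)
  have hi' : (1 : ℝ) < i := by exact_mod_cast hi
  have hb' : (1 : ℝ) < (n - k - i : ℕ) := by exact_mod_cast (show 1 < n - k - i by omega)
  have hclique := cubic_add_cubic_le (κ := k) k.cast_nonneg hi'.le hb'.le hsum
  have hcross := sum_lt_sum_of_nonempty (univ_nonempty_iff.2 ⟨⟨0, hk⟩⟩) fun v _ =>
    (strictConvexOn_mul_sqrt_sq_add_sq k.cast_nonneg (H.degree v + (n - k : ℕ) : ℝ)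
      ).map_add_map_lt_of_add_eq (mem_Ici.2 le_rfl) (mem_Ici.2 (by linarith)) hi' hb' hsum
  refine add_lt_add_of_lt_of_le (add_lt_add_of_le_of_lt ?_ hcross) le_rfl
  exact mul_le_mul_of_nonneg_left (by linarith) (by positivity)
end

section
/- Let G be a graph on n vertices with vertex connectivity at most k (1 ≤ k ≤ n−2) that maximizes the Sombor index among all such graphs, and let W be a k-vertex cut of G. Then G − W has exactly two connected components, and for each component H of G − W, the induced subgraph G[V(H) ∪ W] is a clique. -/
/-- The vertex connectivity of G is at most k: either G has at most k+1
vertices, or some set of at most k vertices disconnects G. -/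
def vertexConnAtMost {V : Type*} [Fintype V] (G : SimpleGraph V) (k : ℕ) : Prop :=
  Fintype.card V ≤ k + 1 ∨
    ∃ S : Finset V, S.card ≤ k ∧ ¬ (G.induce ((↑S : Set V)ᶜ)).Connected

/-!
Adding an edge strictly increases the Sombor index, so by maximality adding any missing edge
to `G` must reconnect `G - W`. An edge between two components of `G - W` does not do so when a
third component exists, and an edge inside `V(C) ∪ W` for a component `C` never merges two
components; hence `G - W` has exactly two components and each `V(C) ∪ W` is a clique.
-/

open SimpleGraph

section

variable {V : Type*}

theorem somborIndex_strictMono [Fintype V] : StrictMono (somborIndex : SimpleGraph V → ℝ) := by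
  classical
  intro G H hGH
  obtain ⟨x, y, hxy, hnxy⟩ : ∃ x y, H.Adj x y ∧ ¬ G.Adj x y := by
    by_contra! h
    exact hGH.not_ge h
  let weight (K : SimpleGraph V) : Sym2 V → ℝ :=
    Sym2.lift ⟨fun u v => √((K.degree u : ℝ) ^ 2 + (K.degree v : ℝ) ^ 2),
      fun u v => by simp [add_comm]⟩
  have weight_mono (e : Sym2 V) : weight G e ≤ weight H e := by
    induction e using Sym2.inductionOn with
    | hf u v =>
      simp only [weight, Sym2.lift_mk]
      gcongr <;> exact degree_le_of_le hGH.le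
  have weight_nonneg (e : Sym2 V) : 0 ≤ weight H e := by
    induction e using Sym2.inductionOn with
    | hf u v => exact Real.sqrt_nonneg _
  have weight_pos : 0 < weight H s(x, y) := by
    have : 0 < H.degree x := (degree_pos_iff_exists_adj H x).mpr ⟨y, hxy⟩
    simp only [weight, Sym2.lift_mk]
    positivity
  calc somborIndex G = ∑ e ∈ G.edgeFinset, weight G e := rfl
    _ ≤ ∑ e ∈ G.edgeFinset, weight H e := Finset.sum_le_sum fun e _ => weight_mono e
    _ < ∑ e ∈ H.edgeFinset, weight H e :=
      Finset.sum_lt_sum_of_subset (edgeFinset_mono hGH.le) (mem_edgeFinset.mpr hxy)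
        (by simpa using hnxy) weight_pos fun e _ _ => weight_nonneg e
    _ = somborIndex H := rfl

namespace SimpleGraph

variable {G : SimpleGraph V} {S : Set V}

theorem apply_connectedComponentMk_eq_of_reachable_induce_sup_edge {β : Type*} {a b : V}
    (f : (G.induce S).ConnectedComponent → β)
    (hf : ∀ x y : S, (x : V) = a → (y : V) = b →
      f ((G.induce S).connectedComponentMk x) = f ((G.induce S).connectedComponentMk y))
    {x y : S} (h : ((G ⊔ edge a b).induce S).Reachable x y) :
    f ((G.induce S).connectedComponentMk x) = f ((G.induce S).connectedComponentMk y) := by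
  have step : ∀ z w : S, ((G ⊔ edge a b).induce S).Adj z w →
      f ((G.induce S).connectedComponentMk z) = f ((G.induce S).connectedComponentMk w) := by
    intro z w hzw
    rcases (sup_adj _ _ _ _).mp hzw with hG | hedge
    · exact congrArg f (ConnectedComponent.sound (show (G.induce S).Adj z w from hG).reachable)
    · rcases ((edge_adj _ _ _ _).mp hedge).1 with ⟨rfl, rfl⟩ | ⟨rfl, rfl⟩
      · exact hf z w rfl rfl
      · exact (hf w z rfl rfl).symm
  simpa [Relation.reflTransGen_eq_self] using
    ((reachable_iff_reflTransGen x y).mp h).lift _ step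

theorem connectedComponentMk_eq_of_mem_supp_union {W : Set V}
    (C : (G.induce Wᶜ).ConnectedComponent) {x : (Wᶜ : Set V)}
    (hx : (x : V) ∈ Subtype.val '' C.supp ∪ W) : (G.induce Wᶜ).connectedComponentMk x = C := by
  rcases hx with ⟨y, hy, hyx⟩ | hxW
  · exact Subtype.ext hyx ▸ hy
  · exact absurd hxW x.2

theorem eq_or_eq_of_connected_induce_sup_edge {x y : S}
    (h : ((G ⊔ edge x y).induce S).Connected) (C : (G.induce S).ConnectedComponent) :
    C = (G.induce S).connectedComponentMk x ∨ C = (G.induce S).connectedComponentMk y := by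
  induction C using ConnectedComponent.ind with | h z => ?_
  by_contra! hz
  have hreach := apply_connectedComponentMk_eq_of_reachable_induce_sup_edge
    (· = (G.induce S).connectedComponentMk z) (fun _ _ hx hy => ?_) (h.preconnected z x)
  · exact hz.1 (eq_iff_iff.mp hreach |>.mp rfl).symm
  · rw [Subtype.ext hx, Subtype.ext hy]
    exact propext (iff_of_false (Ne.symm hz.1) (Ne.symm hz.2))

theorem Preconnected.of_induce_compl_sup_edge {W : Set V} (C : (G.induce Wᶜ).ConnectedComponent)
    {a b : V} (ha : a ∈ Subtype.val '' C.supp ∪ W) (hb : b ∈ Subtype.val '' C.supp ∪ W)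
    (h : ((G ⊔ edge a b).induce Wᶜ).Preconnected) : (G.induce Wᶜ).Preconnected := fun x y =>
  ConnectedComponent.exact <| apply_connectedComponentMk_eq_of_reachable_induce_sup_edge id
    (fun _ _ hx hy => (connectedComponentMk_eq_of_mem_supp_union C (hx ▸ ha)).trans
      (connectedComponentMk_eq_of_mem_supp_union C (hy ▸ hb)).symm) (h x y)

end SimpleGraph

theorem connected_induce_compl_sup_edge_of_isMax [Fintype V] {G : SimpleGraph V} {k : ℕ}
    (hmax : ∀ H : SimpleGraph V, vertexConnAtMost H k → somborIndex H ≤ somborIndex G)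
    {W : Finset V} (hW : W.card ≤ k) {a b : V} (hab : a ≠ b) (hnadj : ¬ G.Adj a b) :
    ((G ⊔ edge a b).induce ((↑W : Set V)ᶜ)).Connected := by
  by_contra hdisc
  exact (hmax _ (.inr ⟨W, hW, hdisc⟩)).not_gt (somborIndex_strictMono (lt_sup_edge _ _ _ hab hnadj))

end

theorem structure_of_max_somborIndex_general {V : Type*} [Fintype V] (G : SimpleGraph V)
    (n k : ℕ) (hcard : Fintype.card V = n) (hk : 1 ≤ k) (hkn : k ≤ n - 2)
    (hmax : ∀ H : SimpleGraph V, vertexConnAtMost H k → somborIndex H ≤ somborIndex G)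
    (W : Finset V) (hW : W.card = k)
    (hcut : ¬ (G.induce ((↑W : Set V)ᶜ)).Connected) :
    Nat.card (G.induce ((↑W : Set V)ᶜ)).ConnectedComponent = 2 ∧
      ∀ C : (G.induce ((↑W : Set V)ᶜ)).ConnectedComponent,
        G.IsClique ((Subtype.val '' C.supp) ∪ (↑W : Set V)) := by
  set S : Set V := (↑W : Set V)ᶜ
  have hS : Nonempty S := by
    obtain ⟨v, -, hv⟩ := Finset.exists_mem_notMem_of_card_lt_card
      (s := W) (t := Finset.univ) (by rw [Finset.card_univ]; omega)
    exact ⟨⟨v, hv⟩⟩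
  have hpre : ¬ (G.induce S).Preconnected := fun h => hcut ((connected_iff _).mpr ⟨h, hS⟩)
  have hadd {a b : V} (hab : a ≠ b) (hnadj : ¬ G.Adj a b) : ((G ⊔ edge a b).induce S).Connected :=
    connected_induce_compl_sup_edge_of_isMax hmax hW.le hab hnadj
  refine ⟨?_, fun C => (isClique_iff _).mpr fun a ha b hb hab => by_contra fun hnadj =>
    hpre ((hadd hab hnadj).preconnected.of_induce_compl_sup_edge C ha hb)⟩
  obtain ⟨x, y, hxy⟩ : ∃ x y : S,
      (G.induce S).connectedComponentMk x ≠ (G.induce S).connectedComponentMk y := by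
    by_contra! h
    exact hpre fun x y => ConnectedComponent.exact (h x y)
  have hne : (x : V) ≠ y := fun h => hxy (congrArg _ (Subtype.ext h))
  have hnadj : ¬ G.Adj x y := fun h =>
    hxy (ConnectedComponent.sound (show (G.induce S).Adj x y from h).reachable)
  refine Nat.card_eq_two_iff.mpr ⟨_, _, hxy, Set.eq_univ_of_forall fun C => ?_⟩
  simpa using eq_or_eq_of_connected_induce_sup_edge (hadd hne hnadj) C

/-- If G maximizes the Sombor index among graphs on n vertices with vertex
connectivity at most k (1 ≤ k ≤ n−2) and W is a k-vertex cut of G, then G − W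
has exactly two connected components, and for every component C of G − W the
induced subgraph on V(C) ∪ W is a clique. -/
theorem structure_of_max_somborIndex {V : Type*} [Fintype V] (G : SimpleGraph V)
    (n k : ℕ) (hcard : Fintype.card V = n) (hk : 1 ≤ k) (hkn : k ≤ n - 2)
    (hconn : vertexConnAtMost G k)
    (hmax : ∀ H : SimpleGraph V, vertexConnAtMost H k → somborIndex H ≤ somborIndex G)
    (W : Finset V) (hW : W.card = k)
    (hcut : ¬ (G.induce ((↑W : Set V)ᶜ)).Connected) :
    Nat.card (G.induce ((↑W : Set V)ᶜ)).ConnectedComponent = 2 ∧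
      ∀ C : (G.induce ((↑W : Set V)ᶜ)).ConnectedComponent,
        G.IsClique ((Subtype.val '' C.supp) ∪ (↑W : Set V)) :=
  structure_of_max_somborIndex_general G n k hcard hk hkn hmax W hW hcut
end
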